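/- arXiv:2409.13601 — 3 statements merged into one kernel-verified Lean document; each statement's English description precedes it below -/
import Mathlib

section
/- Let M be an irreducible unitary projective co-representation of G of dimension 2m with factor system ω satisfying ω(e,e) = 1, whose restriction to H is unitarily equivalent to D ⊕ D for some irreducible projective representation D of H (the type-II, quaternionic case, norm R = 4). Then M is equivalent to a co-representation U in standard form: U(h) = diag(D(h), D(h)) for all h ∈ H, and U(T0) = [[0, −W],[W, 0]] in m×m block form, for some unitary m×m matrix W satisfying W·conj(W) = −ω(T0,T0)·D(T0²). -/
/-! Conjugating `M` by `S` gives an equivalent co-representation `N` with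
`N h = diag (D h, D h)` on `H`. Every `m × m` block `X` of `N T₀` satisfies
`X · conj (D h) = c h • D (T₀ h T₀⁻¹) · X`; by Schur's lemma such twisted intertwiners form a
line spanned by a unitary `U`, so `N T₀ = K ⊗ U` with `K` a unitary `2 × 2` matrix. The relation
`N T₀ · conj (N T₀) = ω T₀ T₀ • N (T₀²)` forces `K · conj K = κ • 1` with `κ = ±1`. If `κ = 1`,
`v ↦ K · conj v` is a real structure on `ℂ²`; a fixed vector `z` spans the proper invariant
subspace `z ⊗ ℂᵐ`, contradicting irreducibility. Hence `κ = -1`, `K` is antisymmetric,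
`K = [[0, -c], [c, 0]]` with `|c| = 1`, and `W = c • U`. -/

open Matrix Complex BigOperators

noncomputable section

def mconj {ι : Type*} (u : ℤˣ) (X : Matrix ι ι ℂ) : Matrix ι ι ℂ :=
  if u = 1 then X else X.map (starRingEnd ℂ)

def vconj {ι : Type*} (u : ℤˣ) (v : ι → ℂ) : ι → ℂ :=
  if u = 1 then v else star v

structure IsCoRep {G : Type*} [Group G] {ι : Type*} [Fintype ι] [DecidableEq ι] (s : G →* ℤˣ)
    (M : G → Matrix ι ι ℂ) (ω : G → G → ℂ) : Prop where
  isUnit : ∀ g, IsUnit (M g)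
  omega_norm : ∀ g1 g2, ‖ω g1 g2‖ = 1
  mul_eq : ∀ g1 g2, M g1 * mconj (s g1) (M g2) = ω g1 g2 • M (g1 * g2)

structure IsUnitaryCoRep {G : Type*} [Group G] {ι : Type*} [Fintype ι] [DecidableEq ι]
    (s : G →* ℤˣ) (M : G → Matrix ι ι ℂ) (ω : G → G → ℂ) extends IsCoRep s M ω : Prop where
  unitary : ∀ g, M g ∈ Matrix.unitaryGroup ι ℂ

def rho {G : Type*} [Group G] {ι : Type*} [Fintype ι] (s : G →* ℤˣ) (M : G → Matrix ι ι ℂ)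
    (g : G) (v : ι → ℂ) : ι → ℂ :=
  (M g).mulVec (vconj (s g) v)

def InvariantSub {G : Type*} [Group G] {ι : Type*} [Fintype ι] (s : G →* ℤˣ)
    (M : G → Matrix ι ι ℂ) (W : Submodule ℂ (ι → ℂ)) : Prop :=
  ∀ g : G, ∀ v ∈ W, rho s M g v ∈ W

def IrreducibleCoRep {G : Type*} [Group G] {ι : Type*} [Fintype ι] (s : G →* ℤˣ)
    (M : G → Matrix ι ι ℂ) : Prop :=
  ∀ W : Submodule ℂ (ι → ℂ), InvariantSub s M W → W = ⊥ ∨ W = ⊤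

def IsProjRepOnH {G : Type*} [Group G] {ι : Type*} [Fintype ι] [DecidableEq ι] (s : G →* ℤˣ)
    (D : G → Matrix ι ι ℂ) (ω : G → G → ℂ) : Prop :=
  (∀ h, s h = 1 → D h ∈ Matrix.unitaryGroup ι ℂ) ∧
  ∀ h1 h2, s h1 = 1 → s h2 = 1 → D h1 * D h2 = ω h1 h2 • D (h1 * h2)

def IrreducibleOnH {G : Type*} [Group G] {ι : Type*} [Fintype ι] (s : G →* ℤˣ)
    (D : G → Matrix ι ι ℂ) : Prop :=
  ∀ W : Submodule ℂ (ι → ℂ), (∀ h, s h = 1 → ∀ v ∈ W, (D h).mulVec v ∈ W) →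
    W = ⊥ ∨ W = ⊤

def CoRepEquiv {G : Type*} [Group G] {α β : Type*} [Fintype α] [DecidableEq α]
    [Fintype β] [DecidableEq β] (s : G →* ℤˣ)
    (M1 : G → Matrix α α ℂ) (M2 : G → Matrix β β ℂ) : Prop :=
  ∃ (e : α ≃ β) (S : Matrix β β ℂ), S ∈ Matrix.unitaryGroup β ℂ ∧
    ∀ g, M2 g = S * (M1 g).submatrix e.symm e.symm * (mconj (s g) S)⁻¹

open ComplexConjugate

section Conjugation

variable {ι κ : Type*}

@[simp] lemma mconj_one (X : Matrix ι ι ℂ) : mconj 1 X = X := if_pos rfl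

@[simp] lemma mconj_neg_one (X : Matrix ι ι ℂ) : mconj (-1) X = X.map conj := if_neg (by decide)

@[simp] lemma vconj_one (v : ι → ℂ) : vconj 1 v = v := if_pos rfl

@[simp] lemma vconj_neg_one (v : ι → ℂ) : vconj (-1) v = star v := if_neg (by decide)

@[simp] lemma map_conj_map_conj (X : Matrix ι κ ℂ) : (X.map conj).map conj = X := by
  ext; simp

lemma mconj_mconj (u v : ℤˣ) (X : Matrix ι ι ℂ) : mconj u (mconj v X) = mconj (u * v) X := by
  rcases Int.units_eq_one_or u with rfl | rfl <;> rcases Int.units_eq_one_or v with rfl | rfl <;>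
    ext <;> simp

lemma vconj_vconj (u v : ℤˣ) (x : ι → ℂ) : vconj u (vconj v x) = vconj (u * v) x := by
  rcases Int.units_eq_one_or u with rfl | rfl <;> rcases Int.units_eq_one_or v with rfl | rfl <;>
    simp

lemma mconj_star (u : ℤˣ) (X : Matrix ι ι ℂ) : mconj u (star X) = star (mconj u X) := by
  rcases Int.units_eq_one_or u with rfl | rfl
  · simp
  · simp only [mconj_neg_one, star_eq_conjTranspose]
    exact conjTranspose_map _ fun _ => rfl

lemma mconj_submatrix (u : ℤˣ) (X : Matrix ι ι ℂ) (f : κ → ι) :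
    mconj u (X.submatrix f f) = (mconj u X).submatrix f f := by
  rcases Int.units_eq_one_or u with rfl | rfl <;> rfl

lemma vconj_comp (u : ℤˣ) (v : ι → ℂ) (f : κ → ι) : vconj u (v ∘ f) = vconj u v ∘ f := by
  rcases Int.units_eq_one_or u with rfl | rfl <;> rfl

variable [Fintype ι]

lemma mconj_mul (u : ℤˣ) (X Y : Matrix ι ι ℂ) : mconj u (X * Y) = mconj u X * mconj u Y := by
  rcases Int.units_eq_one_or u with rfl | rfl <;> simp [Matrix.map_mul]

lemma star_mulVec_eq_map_mulVec (X : Matrix ι ι ℂ) (v : ι → ℂ) :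
    star (X *ᵥ v) = X.map conj *ᵥ star v := by
  ext i
  simp [mulVec, dotProduct]

lemma vconj_mulVec (u : ℤˣ) (X : Matrix ι ι ℂ) (v : ι → ℂ) :
    vconj u (X *ᵥ v) = mconj u X *ᵥ vconj u v := by
  rcases Int.units_eq_one_or u with rfl | rfl <;> simp [star_mulVec_eq_map_mulVec]

variable [DecidableEq ι]

lemma map_conj_mem_unitaryGroup {X : Matrix ι ι ℂ} (hX : X ∈ unitaryGroup ι ℂ) :
    X.map conj ∈ unitaryGroup ι ℂ :=
  map_star_mem_unitaryGroup_iff.mpr hX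

lemma mconj_mem_unitaryGroup (u : ℤˣ) {X : Matrix ι ι ℂ} (hX : X ∈ unitaryGroup ι ℂ) :
    mconj u X ∈ unitaryGroup ι ℂ := by
  rcases Int.units_eq_one_or u with rfl | rfl
  · simpa using hX
  · simpa using map_conj_mem_unitaryGroup hX

lemma submatrix_equiv_mem_unitaryGroup [Fintype κ] [DecidableEq κ] {X : Matrix ι ι ℂ}
    (hX : X ∈ unitaryGroup ι ℂ) (e : κ ≃ ι) : X.submatrix e e ∈ unitaryGroup κ ℂ := by
  rw [mem_unitaryGroup_iff', star_eq_conjTranspose, conjTranspose_submatrix,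
    submatrix_mul_equiv, ← star_eq_conjTranspose, Unitary.star_mul_self_of_mem hX,
    submatrix_one_equiv]

lemma ne_zero_of_mem_unitaryGroup [Nonempty ι] {X : Matrix ι ι ℂ} (hX : X ∈ unitaryGroup ι ℂ) :
    X ≠ 0 := by
  rintro rfl
  simpa using Unitary.star_mul_self_of_mem hX

end Conjugation

section CoRep

variable {G : Type*} [Group G] {ι : Type*} [Fintype ι] [DecidableEq ι] {s : G →* ℤˣ}
  {M : G → Matrix ι ι ℂ} {ω : G → G → ℂ}

lemma IsCoRep.omega_ne_zero (hM : IsCoRep s M ω) (g₁ g₂ : G) : ω g₁ g₂ ≠ 0 :=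
  norm_ne_zero_iff.mp (by simp [hM.omega_norm])

lemma IsCoRep.rho_rho (hM : IsCoRep s M ω) (g₁ g₂ : G) (v : ι → ℂ) :
    rho s M g₁ (rho s M g₂ v) = ω g₁ g₂ • rho s M (g₁ * g₂) v := by
  simp only [rho, vconj_mulVec, vconj_vconj, mulVec_mulVec, hM.mul_eq, smul_mulVec, map_mul]

lemma IsCoRep.invariantSub_of_unitary_of_antiunitary (hM : IsCoRep s M ω) {T₀ : G}
    (hT₀ : s T₀ = -1) {V : Submodule ℂ (ι → ℂ)}
    (hH : ∀ h, s h = 1 → ∀ v ∈ V, rho s M h v ∈ V) (hT : ∀ v ∈ V, rho s M T₀ v ∈ V) :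
    InvariantSub s M V := by
  intro g v hv
  rcases Int.units_eq_one_or (s g) with hg | hg
  · exact hH g hg v hv
  · have hgT : s (g * T₀⁻¹) = 1 := by simp [hg, hT₀]
    have key := hM.rho_rho (g * T₀⁻¹) T₀ v
    rw [inv_mul_cancel_right, ← inv_smul_eq_iff₀ (hM.omega_ne_zero _ _)] at key
    rw [← key]
    exact V.smul_mem _ (hH _ hgT _ (hT v hv))

lemma IsCoRep.mul_map_conj_self {T₀ : G} (hM : IsCoRep s M ω) (hT₀ : s T₀ = -1) :
    M T₀ * (M T₀).map conj = ω T₀ T₀ • M (T₀ * T₀) := by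
  simpa [hT₀] using hM.mul_eq T₀ T₀

lemma IsCoRep.mul_map_conj_eq {T₀ h : G} (hM : IsCoRep s M ω) (hT₀ : s T₀ = -1)
    (hh : s h = 1) :
    M T₀ * (M h).map conj =
      (ω T₀ h / ω (T₀ * h * T₀⁻¹) T₀) • (M (T₀ * h * T₀⁻¹) * M T₀) := by
  have hconj : s (T₀ * h * T₀⁻¹) = 1 := by simp [hh]
  have h₁ := hM.mul_eq (T₀ * h * T₀⁻¹) T₀
  rw [hconj, mconj_one, inv_mul_cancel_right] at h₁
  rw [← mconj_neg_one, ← hT₀, hM.mul_eq, h₁, smul_smul,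
    div_mul_cancel₀ _ (hM.omega_ne_zero _ _)]

end CoRep

section Transport

variable {G : Type*} [Group G] {s : G →* ℤˣ} {α β : Type*} [Fintype β]

lemma IrreducibleCoRep.of_surjective [Fintype α] {M : G → Matrix α α ℂ} {N : G → Matrix β β ℂ}
    (hM : IrreducibleCoRep s M) (L : (α → ℂ) →ₗ[ℂ] β → ℂ) (hL : Function.Surjective L)
    (hLρ : ∀ g v, rho s N g (L v) = L (rho s M g v)) : IrreducibleCoRep s N := by
  intro V hV
  have hV' : InvariantSub s M (V.comap L) := fun g v hv => by
    simpa [hLρ] using hV g (L v) hv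
  rw [← Submodule.map_comap_eq_of_surjective hL V]
  rcases hM _ hV' with h | h <;> rw [h]
  · exact .inl (Submodule.map_bot L)
  · exact .inr (by rw [Submodule.map_top, LinearMap.range_eq_top.mpr hL])

variable [DecidableEq β]

def conjCoRep (s : G →* ℤˣ) (e : α ≃ β) (S : Matrix β β ℂ) (M : G → Matrix α α ℂ) (g : G) :
    Matrix β β ℂ :=
  S * (M g).submatrix e.symm e.symm * (mconj (s g) S)⁻¹

variable {M : G → Matrix α α ℂ} {ω : G → G → ℂ} {e : α ≃ β} {S : Matrix β β ℂ}

lemma conjCoRep_eq (hS : S ∈ unitaryGroup β ℂ) (g : G) :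
    conjCoRep s e S M g = S * (M g).submatrix e.symm e.symm * star (mconj (s g) S) := by
  rw [conjCoRep, inv_eq_left_inv (Unitary.star_mul_self_of_mem (mconj_mem_unitaryGroup _ hS))]

variable [Fintype α]

lemma irreducibleCoRep_conjCoRep (hM : IrreducibleCoRep s M) (hS : S ∈ unitaryGroup β ℂ) :
    IrreducibleCoRep s (conjCoRep s e S M) := by
  have hSsurj : Function.Surjective (mulVecLin S) := fun v =>
    ⟨star S *ᵥ v, by simp [mulVec_mulVec, Unitary.mul_star_self_of_mem hS]⟩
  refine hM.of_surjective ((mulVecLin S).comp (LinearMap.funLeft ℂ ℂ e.symm))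
    (hSsurj.comp (LinearMap.funLeft_surjective_of_injective _ _ _ e.symm.injective))
    fun g v => ?_
  have hP := Unitary.star_mul_self_of_mem (mconj_mem_unitaryGroup (s g) hS)
  change rho s _ g (S *ᵥ (v ∘ e.symm)) = S *ᵥ (rho s M g v ∘ e.symm)
  simp only [rho, conjCoRep_eq hS, vconj_mulVec, vconj_comp, mulVec_mulVec, Matrix.mul_assoc, hP,
    Matrix.mul_one]
  rw [← mulVec_mulVec, submatrix_mulVec_equiv]
  simp [Function.comp_def]

variable [DecidableEq α]

lemma coRepEquiv_conjCoRep (hS : S ∈ unitaryGroup β ℂ) : CoRepEquiv s M (conjCoRep s e S M) :=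
  ⟨e, S, hS, fun _ => rfl⟩

lemma isUnitaryCoRep_conjCoRep (hM : IsUnitaryCoRep s M ω) (hS : S ∈ unitaryGroup β ℂ) :
    IsUnitaryCoRep s (conjCoRep s e S M) ω := by
  have hU : ∀ g, conjCoRep s e S M g ∈ unitaryGroup β ℂ := fun g => by
    rw [conjCoRep_eq hS]
    exact mul_mem (mul_mem hS (submatrix_equiv_mem_unitaryGroup (hM.unitary g) e.symm))
      (Unitary.star_mem (mconj_mem_unitaryGroup _ hS))
  refine ⟨⟨fun g => Unitary.isUnit_coe (U := ⟨_, hU g⟩), hM.omega_norm, fun g₁ g₂ => ?_⟩, hU⟩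
  have hP := Unitary.star_mul_self_of_mem (mconj_mem_unitaryGroup (s g₁) hS)
  simp only [conjCoRep_eq hS, mconj_mul, mconj_star, mconj_mconj, ← map_mul, mconj_submatrix,
    Matrix.mul_assoc, ← Matrix.mul_assoc (star (mconj (s g₁) S)), hP, Matrix.one_mul]
  have hsmul (c : ℂ) (X : Matrix α α ℂ) :
      (c • X).submatrix e.symm e.symm = c • X.submatrix e.symm e.symm := rfl
  rw [← Matrix.mul_assoc ((M g₁).submatrix _ _), submatrix_mul_equiv, hM.mul_eq, hsmul,
    Matrix.smul_mul, Matrix.mul_smul]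

lemma conjCoRep_submatrix_apply {S : Matrix α α ℂ} (hS : S ∈ unitaryGroup α ℂ) {g : G}
    (hg : s g = 1) :
    conjCoRep s e (S.submatrix e.symm e.symm) M g = (S * M g * star S).submatrix e.symm e.symm := by
  rw [conjCoRep_eq (submatrix_equiv_mem_unitaryGroup hS e.symm), hg, mconj_one,
    star_eq_conjTranspose, conjTranspose_submatrix, submatrix_mul_equiv, submatrix_mul_equiv,
    star_eq_conjTranspose]

end Transport

section Schur

open scoped ComplexOrder

variable {G : Type*} [Group G] {s : G →* ℤˣ} {ι : Type*} [Fintype ι] [DecidableEq ι]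
  [Nonempty ι] {D : G → Matrix ι ι ℂ}

lemma IrreducibleOnH.eq_smul_one_of_commute (hD : IrreducibleOnH s D) {X : Matrix ι ι ℂ}
    (hX : ∀ h, s h = 1 → X * D h = D h * X) : ∃ μ : ℂ, X = μ • 1 := by
  obtain ⟨μ, hμ⟩ := Module.End.exists_eigenvalue (toLin' X)
  refine ⟨μ, ?_⟩
  have hinv : ∀ h, s h = 1 → ∀ v ∈ Module.End.eigenspace (toLin' X) μ,
      D h *ᵥ v ∈ Module.End.eigenspace (toLin' X) μ := by
    intro h hh v hv
    rw [Module.End.mem_eigenspace_iff, toLin'_apply] at hv ⊢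
    rw [mulVec_mulVec, hX h hh, ← mulVec_mulVec, hv, mulVec_smul]
  rcases hD _ hinv with h | h
  · exact absurd h (Module.End.hasEigenvalue_iff.mp hμ)
  · refine toLin'.injective (LinearMap.ext fun v => ?_)
    have hv : v ∈ Module.End.eigenspace (toLin' X) μ := h ▸ Submodule.mem_top
    rw [Module.End.mem_eigenspace_iff] at hv
    simp [hv]

lemma exists_smul_mem_unitaryGroup {X : Matrix ι ι ℂ} (hX : X ≠ 0) {r : ℂ}
    (hr : Xᴴ * X = r • 1) : ∃ t : ℂ, t • X ∈ unitaryGroup ι ℂ := by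
  have hr_pos : 0 < r := by
    refine lt_of_le_of_ne ?_ fun h => hX ?_
    · simpa [hr] using (posSemidef_conjTranspose_mul_self X).diag_nonneg
        (i := Classical.arbitrary ι)
    · rw [← conjTranspose_mul_self_eq_zero, hr, ← h, zero_smul]
  obtain ⟨a, ha, rfl⟩ := RCLike.pos_iff_exists_ofReal.mp hr_pos
  refine ⟨((√a)⁻¹ : ℝ), ?_⟩
  have hsqrt : ((√a : ℂ)⁻¹ * (√a : ℂ)⁻¹ * a) = 1 := by
    exact_mod_cast show (√a)⁻¹ * (√a)⁻¹ * a = 1 by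
      rw [← mul_inv, Real.mul_self_sqrt ha.le, inv_mul_cancel₀ ha.ne']
  rw [mem_unitaryGroup_iff', star_eq_conjTranspose, conjTranspose_smul, Matrix.smul_mul,
    Matrix.mul_smul, hr, smul_smul, smul_smul]
  simp [hsqrt]

end Schur

section TwistedIntertwiner

variable {G : Type*} [Group G] {ι : Type*} [Fintype ι]

def IsTwistedIntertwiner (s : G →* ℤˣ) (T₀ : G) (D : G → Matrix ι ι ℂ) (c : G → ℂ)
    (X : Matrix ι ι ℂ) : Prop :=
  ∀ h, s h = 1 → X * (D h).map conj = c h • (D (T₀ * h * T₀⁻¹) * X)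

variable {s : G →* ℤˣ} {T₀ : G} {D : G → Matrix ι ι ℂ} {c : G → ℂ}

lemma IsTwistedIntertwiner.smul {X : Matrix ι ι ℂ} (hX : IsTwistedIntertwiner s T₀ D c X)
    (t : ℂ) : IsTwistedIntertwiner s T₀ D c (t • X) := fun h hh => by
  rw [Matrix.smul_mul, hX h hh, Matrix.mul_smul, smul_comm]

variable [DecidableEq ι]

lemma IsTwistedIntertwiner.conjTranspose_mul_self_commute
    (hDu : ∀ h, s h = 1 → D h ∈ unitaryGroup ι ℂ) (hc : ∀ h, ‖c h‖ = 1) {X : Matrix ι ι ℂ}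
    (hX : IsTwistedIntertwiner s T₀ D c X) {h : G} (hh : s h = 1) :
    Xᴴ * X * (D h).map conj = (D h).map conj * (Xᴴ * X) := by
  set P := (D h).map conj
  set Q := D (T₀ * h * T₀⁻¹)
  have hP : P ∈ unitaryGroup ι ℂ := map_conj_mem_unitaryGroup (hDu h hh)
  have hQ : Q ∈ unitaryGroup ι ℂ := hDu _ (by simp [hh])
  have hXQ : Xᴴ * Q = star (c h) • (P * Xᴴ) := by
    have h₁ : star P * Xᴴ = star (c h) • (Xᴴ * star Q) := by
      simpa [star_eq_conjTranspose] using congrArg conjTranspose (hX h hh)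
    calc Xᴴ * Q = P * (star P * Xᴴ) * Q := by
          rw [← Matrix.mul_assoc P, Unitary.mul_star_self_of_mem hP, Matrix.one_mul]
      _ = star (c h) • (P * Xᴴ) := by
          rw [h₁, Matrix.mul_smul, Matrix.smul_mul, Matrix.mul_assoc, Matrix.mul_assoc,
            Unitary.star_mul_self_of_mem hQ, Matrix.mul_one]
  have hcc : c h * star (c h) = 1 := by
    rw [Complex.star_def, Complex.mul_conj, Complex.normSq_eq_norm_sq, hc]
    norm_num
  calc Xᴴ * X * P = c h • (Xᴴ * Q * X) := by
        rw [Matrix.mul_assoc, hX h hh, Matrix.mul_smul, Matrix.mul_assoc]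
    _ = P * (Xᴴ * X) := by
        rw [hXQ, Matrix.smul_mul, smul_smul, hcc, one_smul, Matrix.mul_assoc]

variable [Nonempty ι]

lemma IsTwistedIntertwiner.exists_unitary (hD : IrreducibleOnH s D)
    (hDu : ∀ h, s h = 1 → D h ∈ unitaryGroup ι ℂ) (hc : ∀ h, ‖c h‖ = 1) {X : Matrix ι ι ℂ}
    (hX : IsTwistedIntertwiner s T₀ D c X) (hX₀ : X ≠ 0) :
    ∃ U ∈ unitaryGroup ι ℂ, IsTwistedIntertwiner s T₀ D c U := by
  obtain ⟨μ, hμ⟩ := hD.eq_smul_one_of_commute (X := (Xᴴ * X).map conj) fun h hh => by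
    simpa only [Matrix.map_mul, map_conj_map_conj] using
      congrArg (·.map conj) (hX.conjTranspose_mul_self_commute hDu hc hh)
  have hr : Xᴴ * X = conj μ • 1 := by
    rw [← map_conj_map_conj (Xᴴ * X), hμ]
    ext i j
    by_cases hij : i = j <;> simp [one_apply, hij]
  obtain ⟨t, ht⟩ := exists_smul_mem_unitaryGroup hX₀ hr
  exact ⟨t • X, ht, hX.smul t⟩

lemma IsTwistedIntertwiner.exists_eq_smul (hD : IrreducibleOnH s D) (hc : ∀ h, c h ≠ 0)
    {U Z : Matrix ι ι ℂ} (hU : U ∈ unitaryGroup ι ℂ) (hUD : IsTwistedIntertwiner s T₀ D c U)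
    (hZD : IsTwistedIntertwiner s T₀ D c Z) : ∃ a : ℂ, Z = a • U := by
  obtain ⟨a, ha⟩ := hD.eq_smul_one_of_commute (X := Z * star U) fun k hk => by
    obtain ⟨h, rfl⟩ : ∃ h, k = T₀ * h * T₀⁻¹ := ⟨T₀⁻¹ * k * T₀, by group⟩
    have hh : s h = 1 := by rwa [map_mul, map_mul, map_inv, mul_inv_cancel_comm] at hk
    have hUh := hUD h hh
    have hZh := hZD h hh
    have hDk : D (T₀ * h * T₀⁻¹) = (c h)⁻¹ • (U * (D h).map conj * star U) := by
      rw [hUh, Matrix.smul_mul, Matrix.mul_assoc, Unitary.mul_star_self_of_mem hU,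
        Matrix.mul_one, smul_smul, inv_mul_cancel₀ (hc h), one_smul]
    calc Z * star U * D (T₀ * h * T₀⁻¹)
        = (c h)⁻¹ • (Z * (star U * U) * (D h).map conj * star U) := by
          simp only [hDk, Matrix.mul_smul, Matrix.mul_assoc]
      _ = D (T₀ * h * T₀⁻¹) * (Z * star U) := by
          rw [Unitary.star_mul_self_of_mem hU, Matrix.mul_one, hZh, Matrix.smul_mul, smul_smul,
            inv_mul_cancel₀ (hc h), one_smul, Matrix.mul_assoc]
  refine ⟨a, ?_⟩
  rw [← smul_one_mul, ← ha, Matrix.mul_assoc, Unitary.star_mul_self_of_mem hU, Matrix.mul_one]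

end TwistedIntertwiner

section BlockKron

variable {ι : Type*}

-- The Kronecker product `K ⊗ X`, laid out in `2 × 2` blocks.
def blockKron (K : Matrix (Fin 2) (Fin 2) ℂ) (X : Matrix ι ι ℂ) : Matrix (ι ⊕ ι) (ι ⊕ ι) ℂ :=
  fromBlocks (K 0 0 • X) (K 0 1 • X) (K 1 0 • X) (K 1 1 • X)

lemma blockKron_one_left (X : Matrix ι ι ℂ) : blockKron 1 X = fromBlocks X 0 0 X := by
  simp [blockKron]

lemma smul_blockKron (a : ℂ) (K : Matrix (Fin 2) (Fin 2) ℂ) (X : Matrix ι ι ℂ) :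
    a • blockKron K X = blockKron K (a • X) := by
  simp [blockKron, fromBlocks_smul, smul_comm a]

lemma blockKron_conjTranspose (K : Matrix (Fin 2) (Fin 2) ℂ) (X : Matrix ι ι ℂ) :
    (blockKron K X)ᴴ = blockKron Kᴴ Xᴴ := by
  simp [blockKron, fromBlocks_conjTranspose]

lemma blockKron_map_conj (K : Matrix (Fin 2) (Fin 2) ℂ) (X : Matrix ι ι ℂ) :
    (blockKron K X).map conj = blockKron (K.map conj) (X.map conj) := by
  simp [blockKron, fromBlocks_map, Matrix.map_smul']

lemma blockKron_mul [Fintype ι] (K K' : Matrix (Fin 2) (Fin 2) ℂ) (X X' : Matrix ι ι ℂ) :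
    blockKron K X * blockKron K' X' = blockKron (K * K') (X * X') := by
  simp [blockKron, fromBlocks_multiply, Matrix.mul_apply, Fin.sum_univ_two, add_smul, smul_smul,
    mul_comm]

lemma blockKron_one_one [DecidableEq ι] : blockKron 1 (1 : Matrix ι ι ℂ) = 1 := by
  rw [blockKron_one_left, fromBlocks_one]

lemma exists_eq_smul_one_of_blockKron_eq {P : Matrix (Fin 2) (Fin 2) ℂ} {Y Z : Matrix ι ι ℂ}
    (hY : Y ≠ 0) (h : blockKron P Y = blockKron 1 Z) : ∃ κ : ℂ, P = κ • 1 ∧ κ • Y = Z := by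
  simp only [blockKron, fromBlocks_inj] at h
  obtain ⟨h₀₀, h₀₁, h₁₀, h₁₁⟩ := h
  simp only [one_apply_eq, one_smul, ne_eq, zero_ne_one, not_false_eq_true, one_apply_ne,
    zero_smul, one_ne_zero, smul_eq_zero, hY, or_false] at h₀₀ h₀₁ h₁₀ h₁₁
  have hP : P 1 1 = P 0 0 := smul_left_injective ℂ hY (h₁₁.trans h₀₀.symm)
  refine ⟨P 0 0, ?_, h₀₀⟩
  ext i j
  fin_cases i <;> fin_cases j <;> simp [h₀₁, h₁₀, hP]

end BlockKron

section BlockStructure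

variable {G : Type*} [Group G] {s : G →* ℤˣ} {T₀ : G} {ι : Type*} [Fintype ι]
  {D : G → Matrix ι ι ℂ} {c : G → ℂ}

lemma IsTwistedIntertwiner.of_fromBlocks {A B C E : Matrix ι ι ℂ}
    (h : IsTwistedIntertwiner s T₀ (fun g => blockKron 1 (D g)) c (fromBlocks A B C E)) :
    IsTwistedIntertwiner s T₀ D c A ∧ IsTwistedIntertwiner s T₀ D c B ∧
      IsTwistedIntertwiner s T₀ D c C ∧ IsTwistedIntertwiner s T₀ D c E := by
  unfold IsTwistedIntertwiner at h ⊢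
  simp only [blockKron_one_left, fromBlocks_map, fromBlocks_multiply, fromBlocks_smul,
    Matrix.map_zero _ (map_zero _), Matrix.mul_zero, Matrix.zero_mul, add_zero, zero_add,
    fromBlocks_inj] at h
  exact ⟨fun g hg => (h g hg).1, fun g hg => (h g hg).2.1, fun g hg => (h g hg).2.2.1,
    fun g hg => (h g hg).2.2.2⟩

variable [DecidableEq ι] {ω : G → G → ℂ} {N : G → Matrix (ι ⊕ ι) (ι ⊕ ι) ℂ}

lemma IsCoRep.exists_mul_map_conj_eq_smul_one (hN : IsCoRep s N ω) (hT₀ : s T₀ = -1)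
    (hdiag : ∀ h, s h = 1 → N h = blockKron 1 (D h)) {K : Matrix (Fin 2) (Fin 2) ℂ}
    {U : Matrix ι ι ℂ} (hNT : N T₀ = blockKron K U) (hU : U * U.map conj ≠ 0) :
    ∃ κ : ℂ, K * K.map conj = κ • 1 ∧ κ • (U * U.map conj) = ω T₀ T₀ • D (T₀ * T₀) := by
  have h := hN.mul_map_conj_self hT₀
  rw [hNT, hdiag _ (by simp [hT₀]), blockKron_map_conj, blockKron_mul, smul_blockKron] at h
  exact exists_eq_smul_one_of_blockKron_eq hU h

variable [Nonempty ι]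

lemma IsUnitaryCoRep.exists_blockKron (hN : IsUnitaryCoRep s N ω) (hT₀ : s T₀ = -1)
    (hD : IrreducibleOnH s D) (hDu : ∀ h, s h = 1 → D h ∈ unitaryGroup ι ℂ)
    (hdiag : ∀ h, s h = 1 → N h = blockKron 1 (D h)) :
    ∃ K U, U ∈ unitaryGroup ι ℂ ∧ N T₀ = blockKron K U := by
  set c : G → ℂ := fun h => ω T₀ h / ω (T₀ * h * T₀⁻¹) T₀
  have hc : ∀ h, ‖c h‖ = 1 := fun h => by simp [c, hN.omega_norm]
  have hN₀ : IsTwistedIntertwiner s T₀ (fun g => blockKron 1 (D g)) c (N T₀) := fun h hh => by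
    dsimp only
    rw [← hdiag h hh, ← hdiag _ (by simp [hh])]
    exact hN.mul_map_conj_eq hT₀ hh
  rw [← fromBlocks_toBlocks (N T₀)] at hN₀ ⊢
  obtain ⟨hA, hB, hC, hE⟩ := hN₀.of_fromBlocks
  obtain ⟨Y, hY, hY₀⟩ : ∃ Y, IsTwistedIntertwiner s T₀ D c Y ∧ Y ≠ 0 := by
    by_contra! h
    refine ne_zero_of_mem_unitaryGroup (hN.unitary T₀) ?_
    rw [← fromBlocks_toBlocks (N T₀), h _ hA, h _ hB, h _ hC, h _ hE, fromBlocks_zero]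
  obtain ⟨U, hU, hUD⟩ := hY.exists_unitary hD hDu hc hY₀
  have hscalar := fun Z (hZ : IsTwistedIntertwiner s T₀ D c Z) =>
    hUD.exists_eq_smul hD (fun _ => div_ne_zero (hN.omega_ne_zero _ _) (hN.omega_ne_zero _ _)) hU hZ
  obtain ⟨a, ha⟩ := hscalar _ hA
  obtain ⟨b, hb⟩ := hscalar _ hB
  obtain ⟨c', hc'⟩ := hscalar _ hC
  obtain ⟨d, hd⟩ := hscalar _ hE
  exact ⟨!![a, b; c', d], U, hU, by simp [blockKron, ha, hb, hc', hd]⟩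

lemma mem_unitaryGroup_of_blockKron_mem {K : Matrix (Fin 2) (Fin 2) ℂ} {U : Matrix ι ι ℂ}
    (hKU : blockKron K U ∈ unitaryGroup (ι ⊕ ι) ℂ) (hU : U ∈ unitaryGroup ι ℂ) :
    K ∈ unitaryGroup (Fin 2) ℂ := by
  rw [mem_unitaryGroup_iff', star_eq_conjTranspose, blockKron_conjTranspose, blockKron_mul,
    ← star_eq_conjTranspose U, Unitary.star_mul_self_of_mem hU, ← blockKron_one_one] at hKU
  obtain ⟨κ, hκ, hκ₁⟩ := exists_eq_smul_one_of_blockKron_eq one_ne_zero hKU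
  have hκ_one : κ = 1 := smul_left_injective ℂ one_ne_zero (hκ₁.trans (one_smul ℂ 1).symm)
  rw [mem_unitaryGroup_iff', star_eq_conjTranspose, hκ, hκ_one, one_smul]

end BlockStructure

section ConjugateSquare

variable {ι : Type*} [Fintype ι] [DecidableEq ι] {K : Matrix ι ι ℂ}

lemma map_conj_eq_smul_star (hK : K ∈ unitaryGroup ι ℂ) {κ : ℂ} (h : K * K.map conj = κ • 1) :
    K.map conj = κ • star K :=
  calc K.map conj = star K * (K * K.map conj) := by
        rw [← Matrix.mul_assoc, Unitary.star_mul_self_of_mem hK, Matrix.one_mul]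
    _ = κ • star K := by rw [h, Matrix.mul_smul, Matrix.mul_one]

lemma eq_one_or_eq_neg_one_of_mul_map_conj [Nonempty ι] (hK : K ∈ unitaryGroup ι ℂ) {κ : ℂ}
    (h : K * K.map conj = κ • 1) : κ = 1 ∨ κ = -1 := by
  have hc := map_conj_eq_smul_star hK h
  have hκ : (κ * κ) • star K = (1 : ℂ) • star K :=
    calc (κ * κ) • star K = κ • (star K)ᵀ := by
          rw [← smul_smul, ← hc]
          congr 1
      _ = (K.map conj)ᵀ := by rw [hc, transpose_smul]
      _ = (1 : ℂ) • star K := by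
          rw [one_smul]
          ext
          simp
  exact mul_self_eq_one_iff.mp (smul_left_injective ℂ
    (star_ne_zero.mpr (ne_zero_of_mem_unitaryGroup hK)) hκ)

lemma transpose_eq_neg_of_mul_map_conj_eq_neg_one (hK : K ∈ unitaryGroup ι ℂ)
    (h : K * K.map conj = -1) : Kᵀ = -K := by
  have hc := map_conj_eq_smul_star hK (κ := -1) (by rw [h, neg_one_smul])
  ext i j
  simpa using congrArg conj (congrFun₂ hc j i)

lemma exists_ne_zero_mulVec_star_eq [Nonempty ι] (hK : K * K.map conj = 1) :
    ∃ z ≠ 0, K *ᵥ star z = z := by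
  have hJ (v : ι → ℂ) : K *ᵥ star (K *ᵥ star v) = v := by
    rw [star_mulVec_eq_map_mulVec, star_star, mulVec_mulVec, hK, one_mulVec]
  -- `v ↦ K *ᵥ star v` is an antilinear involution: `u + K *ᵥ star u` is a fixed vector, and if
  -- it vanishes then `I • u` is one.
  obtain ⟨u, hu⟩ := exists_ne (0 : ι → ℂ)
  by_cases h : u + K *ᵥ star u = 0
  · refine ⟨Complex.I • u, smul_ne_zero Complex.I_ne_zero hu, ?_⟩
    rw [star_smul, mulVec_smul, eq_neg_of_add_eq_zero_right h]
    simp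
  · exact ⟨u + K *ᵥ star u, h, by rw [star_add, mulVec_add, hJ, add_comm]⟩

end ConjugateSquare

section KronVec

variable {ι : Type*}

def kronVec (z : Fin 2 → ℂ) : (ι → ℂ) →ₗ[ℂ] ι ⊕ ι → ℂ where
  toFun w := Sum.elim (z 0 • w) (z 1 • w)
  map_add' v w := by ext (i | i) <;> simp
  map_smul' a w := by ext (i | i) <;> simp [mul_left_comm]

lemma kronVec_apply (z : Fin 2 → ℂ) (w : ι → ℂ) : kronVec z w = Sum.elim (z 0 • w) (z 1 • w) :=
  rfl

lemma star_kronVec (z : Fin 2 → ℂ) (w : ι → ℂ) :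
    star (kronVec z w) = kronVec (star z) (star w) := by
  ext (i | i) <;> simp [kronVec_apply]

lemma blockKron_mulVec_kronVec [Fintype ι] (K : Matrix (Fin 2) (Fin 2) ℂ) (X : Matrix ι ι ℂ)
    (z : Fin 2 → ℂ) (w : ι → ℂ) : blockKron K X *ᵥ kronVec z w = kronVec (K *ᵥ z) (X *ᵥ w) := by
  ext (i | i) <;>
    simp [blockKron, kronVec_apply, fromBlocks_mulVec, smul_mulVec, mulVec_smul, smul_smul,
      add_smul, mulVec_fin_two, mul_comm]

lemma range_kronVec_ne_bot [Nonempty ι] {z : Fin 2 → ℂ} (hz : z ≠ 0) :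
    LinearMap.range (kronVec (ι := ι) z) ≠ ⊥ := by
  intro h
  have hmem := LinearMap.mem_range_self (kronVec z) (fun _ : ι => 1)
  rw [h, Submodule.mem_bot] at hmem
  obtain ⟨i⟩ := ‹Nonempty ι›
  refine hz (funext fun j => ?_)
  fin_cases j
  · simpa [kronVec_apply] using congrFun hmem (.inl i)
  · simpa [kronVec_apply] using congrFun hmem (.inr i)

lemma range_kronVec_ne_top [Fintype ι] [Nonempty ι] (z : Fin 2 → ℂ) :
    LinearMap.range (kronVec (ι := ι) z) ≠ ⊤ := by
  intro h
  have hle := LinearMap.finrank_range_le (kronVec (ι := ι) z)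
  rw [h, finrank_top, Module.finrank_fintype_fun_eq_card, Module.finrank_fintype_fun_eq_card,
    Fintype.card_sum] at hle
  have := Fintype.card_pos (α := ι)
  omega

end KronVec

section RealStructureObstruction

variable {G : Type*} [Group G] {s : G →* ℤˣ} {T₀ : G} {ι : Type*} [Fintype ι] [DecidableEq ι]
  [Nonempty ι] {ω : G → G → ℂ} {N : G → Matrix (ι ⊕ ι) (ι ⊕ ι) ℂ} {D : G → Matrix ι ι ℂ}

lemma IrreducibleCoRep.mul_map_conj_ne_one (hirr : IrreducibleCoRep s N) (hN : IsCoRep s N ω)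
    (hT₀ : s T₀ = -1) (hdiag : ∀ h, s h = 1 → N h = blockKron 1 (D h))
    {K : Matrix (Fin 2) (Fin 2) ℂ} {U : Matrix ι ι ℂ} (hNT : N T₀ = blockKron K U) :
    K * K.map conj ≠ 1 := by
  intro hK
  obtain ⟨z, hz, hKz⟩ := exists_ne_zero_mulVec_star_eq hK
  have hV : InvariantSub s N (LinearMap.range (kronVec z)) := by
    refine hN.invariantSub_of_unitary_of_antiunitary hT₀ ?_ ?_
    · rintro h hh _ ⟨w, rfl⟩
      exact ⟨D h *ᵥ w, by simp [rho, hh, hdiag h hh, blockKron_mulVec_kronVec]⟩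
    · rintro _ ⟨w, rfl⟩
      exact ⟨U *ᵥ star w, by simp [rho, hT₀, hNT, star_kronVec, blockKron_mulVec_kronVec, hKz]⟩
  rcases hirr _ hV with h | h
  · exact range_kronVec_ne_bot hz h
  · exact range_kronVec_ne_top z h

end RealStructureObstruction

section Quaternionic

variable {K : Matrix (Fin 2) (Fin 2) ℂ}

lemma eq_of_transpose_eq_neg (hK : Kᵀ = -K) : K = !![0, -K 1 0; K 1 0, 0] := by
  have h := congrFun₂ hK
  simp only [transpose_apply, Matrix.neg_apply] at h
  have h₀₀ : K 0 0 = 0 := by linear_combination h 0 0 / 2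
  have h₁₁ : K 1 1 = 0 := by linear_combination h 1 1 / 2
  ext i j
  fin_cases i <;> fin_cases j <;> simp [h₀₀, h₁₁, h 1 0]

lemma star_mul_self_apply_one_zero (hK : K ∈ unitaryGroup (Fin 2) ℂ) (hKt : Kᵀ = -K) :
    star (K 1 0) * K 1 0 = 1 := by
  have h := congrFun₂ (mem_unitaryGroup_iff'.mp hK) 0 0
  rw [eq_of_transpose_eq_neg hKt] at h
  simpa [mul_apply, Fin.sum_univ_two] using h

end Quaternionic

theorem typeII_standard_form_general {G : Type*} [Group G]
    (s : G →* ℤˣ)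
    (T0 : G) (hT0 : s T0 = -1)
    {n m : ℕ}
    (M : G → Matrix (Fin n) (Fin n) ℂ) (ω : G → G → ℂ)
    (hM : IsUnitaryCoRep s M ω) (hirr : IrreducibleCoRep s M)
    (D : G → Matrix (Fin m) (Fin m) ℂ)
    (hD : IsProjRepOnH s D ω) (hDirr : IrreducibleOnH s D)
    (e : Fin n ≃ (Fin m ⊕ Fin m)) (S : Matrix (Fin n) (Fin n) ℂ)
    (hS : S ∈ Matrix.unitaryGroup (Fin n) ℂ)
    (hrestr : ∀ h, s h = 1 →
      S * M h * star S = (Matrix.fromBlocks (D h) 0 0 (D h)).submatrix e e) :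
    ∃ (U : G → Matrix (Fin m ⊕ Fin m) (Fin m ⊕ Fin m) ℂ)
      (W : Matrix (Fin m) (Fin m) ℂ),
      IsUnitaryCoRep s U ω ∧
      CoRepEquiv s M U ∧
      (∀ h, s h = 1 → U h = Matrix.fromBlocks (D h) 0 0 (D h)) ∧
      W ∈ Matrix.unitaryGroup (Fin m) ℂ ∧
      W * W.map (starRingEnd ℂ) = (-(ω T0 T0)) • D (T0 * T0) ∧
      U T0 = Matrix.fromBlocks 0 (-W) W 0 := by
  have hS' := submatrix_equiv_mem_unitaryGroup hS e.symm
  set N := conjCoRep s e (S.submatrix e.symm e.symm) M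
  have hN : IsUnitaryCoRep s N ω := isUnitaryCoRep_conjCoRep hM hS'
  have hdiag (h : G) (hh : s h = 1) : N h = fromBlocks (D h) 0 0 (D h) := by
    refine (conjCoRep_submatrix_apply hS hh).trans ?_
    rw [hrestr h hh, submatrix_submatrix]
    simp
  rcases isEmpty_or_nonempty (Fin m) with hm | hm
  · exact ⟨N, 1, hN, coRepEquiv_conjCoRep hS', hdiag, one_mem _, Subsingleton.elim _ _,
      Subsingleton.elim _ _⟩
  have hdiag' (h : G) (hh : s h = 1) : N h = blockKron 1 (D h) :=
    (hdiag h hh).trans (blockKron_one_left _).symm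
  obtain ⟨K, U, hU, hNT⟩ := hN.exists_blockKron hT0 hDirr hD.1 hdiag'
  have hK := mem_unitaryGroup_of_blockKron_mem (hNT ▸ hN.unitary T0) hU
  obtain ⟨κ, hKK, hUU⟩ := hN.exists_mul_map_conj_eq_smul_one hT0 hdiag' hNT
    (ne_zero_of_mem_unitaryGroup (mul_mem hU (map_conj_mem_unitaryGroup hU)))
  rcases eq_one_or_eq_neg_one_of_mul_map_conj hK hKK with rfl | rfl
  · exact absurd (by simpa using hKK)
      ((irreducibleCoRep_conjCoRep hirr hS').mul_map_conj_ne_one hN.toIsCoRep hT0 hdiag' hNT)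
  have hKt := transpose_eq_neg_of_mul_map_conj_eq_neg_one hK (by simpa using hKK)
  have hc := star_mul_self_apply_one_zero hK hKt
  refine ⟨N, K 1 0 • U, hN, coRepEquiv_conjCoRep hS', hdiag,
    Unitary.smul_mem_of_mem (Unitary.mem_iff_star_mul_self.mpr hc) hU, ?_, ?_⟩
  · have hc' : K 1 0 * conj (K 1 0) = 1 := by rw [mul_comm]; exact hc
    rw [show (K 1 0 • U).map conj = conj (K 1 0) • U.map conj by ext; simp, Matrix.smul_mul,
      Matrix.mul_smul, smul_smul, hc', one_smul, neg_smul, ← hUU, neg_one_smul, neg_neg]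
  · rw [hNT, eq_of_transpose_eq_neg hKt]
    simp [blockKron]

/-- standard (canonical) form of a type-II (quaternionic, norm `R = 4`)
irreducible unitary projective co-representation: it is equivalent to `U` with
`U(h) = diag(D(h), D(h))` for `h ∈ H` and `U(T0) = [[0, -W], [W, 0]]` where `W` is
unitary and `W·conj(W) = -ω(T0,T0)·D(T0²)`. -/
theorem typeII_standard_form {G : Type*} [Group G] [Fintype G] [DecidableEq G]
    (s : G →* ℤˣ) (hs : Function.Surjective s)
    (T0 : G) (hT0 : s T0 = -1)
    {n m : ℕ}
    (M : G → Matrix (Fin n) (Fin n) ℂ) (ω : G → G → ℂ)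
    (hM : IsUnitaryCoRep s M ω) (hirr : IrreducibleCoRep s M)
    (hone : ω 1 1 = 1)
    (D : G → Matrix (Fin m) (Fin m) ℂ)
    (hD : IsProjRepOnH s D ω) (hDirr : IrreducibleOnH s D)
    (e : Fin n ≃ (Fin m ⊕ Fin m)) (S : Matrix (Fin n) (Fin n) ℂ)
    (hS : S ∈ Matrix.unitaryGroup (Fin n) ℂ)
    (hrestr : ∀ h, s h = 1 →
      S * M h * star S = (Matrix.fromBlocks (D h) 0 0 (D h)).submatrix e e) :
    ∃ (U : G → Matrix (Fin m ⊕ Fin m) (Fin m ⊕ Fin m) ℂ)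
      (W : Matrix (Fin m) (Fin m) ℂ),
      IsUnitaryCoRep s U ω ∧
      CoRepEquiv s M U ∧
      (∀ h, s h = 1 → U h = Matrix.fromBlocks (D h) 0 0 (D h)) ∧
      W ∈ Matrix.unitaryGroup (Fin m) ℂ ∧
      W * W.map (starRingEnd ℂ) = (-(ω T0 T0)) • D (T0 * T0) ∧
      U T0 = Matrix.fromBlocks 0 (-W) W 0 :=
  typeII_standard_form_general s T0 hT0 M ω hM hirr D hD hDirr e S hS hrestr
end
end

section
/- Under the stated hypotheses, the map ω_τ(g1,g2) := exp(−i·K_{g1}·τ(g2)) (standard dot product in ℝ^d) is well defined and satisfies the anti-unitary factor-system condition: ω_τ(g1,g2)·ω_τ(g1·g2, g3) = ω_τ(g2,g3)^{s(g1)}·ω_τ(g1, g2·g3) for all g1, g2, g3 ∈ L, where z^{1} = z and z^{−1} denotes the complex conjugate of z. (This is the non-symmorphic translation factor of the little co-group of a spin-space group at the momentum point k.) -/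
open Matrix Complex BigOperators

noncomputable section

def zconj (u : ℤˣ) (z : ℂ) : ℂ := if u = 1 then z else (starRingEnd ℂ) z

/-- The reciprocal-lattice shift `K_g = R(g)⁻¹·k − s(g)·k` of the momentum `k`. -/
def Kvec {L : Type*} [Group L] {d : ℕ} (s : L →* ℤˣ) (R : L → Matrix (Fin d) (Fin d) ℝ)
    (k : Fin d → ℝ) (g : L) : Fin d → ℝ :=
  (R g)⁻¹.mulVec k - (((s g : ℤ) : ℝ)) • k

/-- The non-symmorphic translation factor `ω_τ(g1,g2) = exp(−i·K_{g1}·τ(g2))`. -/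
def omegaTau {L : Type*} [Group L] {d : ℕ} (s : L →* ℤˣ) (R : L → Matrix (Fin d) (Fin d) ℝ)
    (τ : L → (Fin d → ℝ)) (k : Fin d → ℝ) (g1 g2 : L) : ℂ :=
  Complex.exp (-Complex.I * ((dotProduct (Kvec s R k g1) (τ g2) : ℝ) : ℂ))

/-!
Write `K_g · τ(h)` for the phase of `ω_τ(g, h)`. Since `R` is orthogonal and `s` multiplicative,
`K` is a crossed homomorphism: `K_{g₁g₂} = R(g₂)ᵀ K_{g₁} + s(g₁) K_{g₂}`. Pairing this with `τ(g₃)`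
and expanding `τ(g₂g₃) = τ(g₂) + R(g₂) τ(g₃) + m` with `m ∈ ℤ^d`, the two sides of the cocycle
condition have phases differing by `K_{g₁} · m ∈ 2πℤ`. Complex conjugation of `exp(−i x)` multiplies
the phase by `s(g₁) = −1`, which accounts for the twist.
-/

lemma zconj_exp_neg_I_mul (u : ℤˣ) (x : ℝ) :
    zconj u (Complex.exp (-Complex.I * x)) = Complex.exp (-Complex.I * (((u : ℤ) : ℝ) * x : ℝ)) := by
  rcases Int.units_eq_one_or u with rfl | rfl
  · simp [zconj]
  · simp only [zconj, if_neg (by decide : (-1 : ℤˣ) ≠ 1), ← Complex.exp_conj]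
    push_cast
    simp only [map_mul, map_neg, Complex.conj_I, Complex.conj_ofReal]
    ring_nf

lemma dotProduct_two_pi_intCast {d : ℕ} (n m : Fin d → ℤ) :
    ((fun i => 2 * Real.pi * n i) ⬝ᵥ fun i => (m i : ℝ)) = 2 * Real.pi * ((∑ i, n i * m i : ℤ) : ℝ) := by
  simp only [dotProduct, Int.cast_sum, Int.cast_mul, Finset.mul_sum, mul_assoc]

section

variable {L : Type*} [Group L] {d : ℕ} (s : L →* ℤˣ) {R : L → Matrix (Fin d) (Fin d) ℝ}
  (k : Fin d → ℝ)

lemma Kvec_mul (hRorth : ∀ g, R g ∈ Matrix.orthogonalGroup (Fin d) ℝ)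
    (hRmul : ∀ g1 g2, R (g1 * g2) = R g1 * R g2) (g1 g2 : L) :
    Kvec s R k (g1 * g2) = (R g2)ᵀ *ᵥ Kvec s R k g1 + ((s g1 : ℤ) : ℝ) • Kvec s R k g2 := by
  have inv_eq_transpose (g : L) : (R g)⁻¹ = (R g)ᵀ :=
    Matrix.inv_eq_left_inv ((Matrix.mem_orthogonalGroup_iff' ..).mp (hRorth g))
  simp only [Kvec, inv_eq_transpose]
  simp only [hRmul, Matrix.transpose_mul, ← Matrix.mulVec_mulVec,
    map_mul, Units.val_mul, Int.cast_mul, Matrix.mulVec_sub, Matrix.mulVec_smul, smul_sub,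
    mul_smul]
  abel

lemma Kvec_dotProduct_cocycle (hRorth : ∀ g, R g ∈ Matrix.orthogonalGroup (Fin d) ℝ)
    (hRmul : ∀ g1 g2, R (g1 * g2) = R g1 * R g2) (τ : L → (Fin d → ℝ)) {g1 g2 g3 : L}
    (hτ : ∃ m : Fin d → ℤ, τ (g2 * g3) - R g2 *ᵥ τ g3 - τ g2 = fun i => (m i : ℝ))
    (hk : ∃ n : Fin d → ℤ, Kvec s R k g1 = fun i => 2 * Real.pi * n i) :
    ∃ N : ℤ, Kvec s R k g1 ⬝ᵥ τ g2 + Kvec s R k (g1 * g2) ⬝ᵥ τ g3 + 2 * Real.pi * N =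
      ((s g1 : ℤ) : ℝ) * (Kvec s R k g2 ⬝ᵥ τ g3) + Kvec s R k g1 ⬝ᵥ τ (g2 * g3) := by
  obtain ⟨m, hm⟩ := hτ
  obtain ⟨n, hn⟩ := hk
  have hτ23 : τ (g2 * g3) = τ g2 + R g2 *ᵥ τ g3 + fun i => (m i : ℝ) := by
    rw [← hm]; abel
  refine ⟨∑ i, n i * m i, ?_⟩
  rw [Kvec_mul s k hRorth hRmul, hτ23, add_dotProduct, smul_dotProduct, dotProduct_add,
    dotProduct_add, Matrix.mulVec_transpose, ← Matrix.dotProduct_mulVec, hn,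
    dotProduct_two_pi_intCast, smul_eq_mul]
  ring

end

theorem nonsymmorphic_factor_cocycle_general {L : Type*} [Group L] {d : ℕ}
    (s : L →* ℤˣ)
    (R : L → Matrix (Fin d) (Fin d) ℝ)
    (hRorth : ∀ g, R g ∈ Matrix.orthogonalGroup (Fin d) ℝ)
    (hRmul : ∀ g1 g2, R (g1 * g2) = R g1 * R g2)
    (τ : L → (Fin d → ℝ))
    (hτ : ∀ g1 g2, ∃ m : Fin d → ℤ,
      τ (g1 * g2) - (R g1).mulVec (τ g2) - τ g1 = fun i => (m i : ℝ))
    (k : Fin d → ℝ)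
    (hk : ∀ g, ∃ m : Fin d → ℤ, Kvec s R k g = fun i => 2 * Real.pi * (m i)) :
    ∀ g1 g2 g3 : L,
      omegaTau s R τ k g1 g2 * omegaTau s R τ k (g1 * g2) g3 =
        zconj (s g1) (omegaTau s R τ k g2 g3) * omegaTau s R τ k g1 (g2 * g3) := by
  intro g1 g2 g3
  obtain ⟨N, hN⟩ := Kvec_dotProduct_cocycle s k hRorth hRmul τ (hτ g2 g3) (hk g1)
  simp only [omegaTau, zconj_exp_neg_I_mul, ← Complex.exp_add]
  rw [Complex.exp_eq_exp_iff_exists_int]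
  refine ⟨N, ?_⟩
  have hNℂ := congrArg (fun x : ℝ => (x : ℂ)) hN
  push_cast at hNℂ ⊢
  linear_combination (-I) * hNℂ

/-- for a little co-group `L` at momentum `k` (orthogonal point-group
action `R`, fractional translations `τ` modulo the lattice `ℤ^d`, and
`K_g = R(g)⁻¹·k − s(g)·k ∈ 2π·ℤ^d`), the non-symmorphic translation factor
`ω_τ(g1,g2) = exp(−i·K_{g1}·τ(g2))` satisfies the anti-unitary factor-system condition. -/
theorem nonsymmorphic_factor_cocycle {L : Type*} [Group L] [Fintype L] {d : ℕ}
    (s : L →* ℤˣ)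
    (R : L → Matrix (Fin d) (Fin d) ℝ)
    (hRorth : ∀ g, R g ∈ Matrix.orthogonalGroup (Fin d) ℝ)
    (hRmul : ∀ g1 g2, R (g1 * g2) = R g1 * R g2)
    (hRone : R 1 = 1)
    (τ : L → (Fin d → ℝ))
    (hτ : ∀ g1 g2, ∃ m : Fin d → ℤ,
      τ (g1 * g2) - (R g1).mulVec (τ g2) - τ g1 = fun i => (m i : ℝ))
    (k : Fin d → ℝ)
    (hk : ∀ g, ∃ m : Fin d → ℤ, Kvec s R k g = fun i => 2 * Real.pi * (m i)) :
    ∀ g1 g2 g3 : L,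
      omegaTau s R τ k g1 g2 * omegaTau s R τ k (g1 * g2) g3 =
        zconj (s g1) (omegaTau s R τ k g2 g3) * omegaTau s R τ k g1 (g2 * g3) :=
  nonsymmorphic_factor_cocycle_general s R hRorth hRmul τ hτ k hk

end
end

section
/- Let M be a unitary projective co-representation of G of dimension n with factor system ω satisfying ω(e,e) = 1, and suppose the fixed anti-unitary element T0 satisfies T0² = e and ω(T0, T0) = −1. Then the conjugate-linear operator ρ(T0) : v ↦ M(T0)·conj(v) satisfies ρ(T0)² = −id. Consequently, for every Hermitian n×n matrix 𝐻 satisfying 𝐻·M(T0) = M(T0)·conj(𝐻) (i.e., 𝐻 commutes with ρ(T0)), every eigenvalue of 𝐻 has even multiplicity; in particular n is even (Kramers-type degeneracy enforced by an anti-unitary symmetry squaring to −1). -/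
open Matrix Complex BigOperators

noncomputable section

/-- The eigenspace `ker(Q - λI)` of a matrix `Q`, as a submodule of `ι → ℂ`. -/
def eigSpace {ι : Type*} [Fintype ι] (Q : Matrix ι ι ℂ) (lam : ℂ) :
    Submodule ℂ (ι → ℂ) where
  carrier := {v | Q.mulVec v = lam • v}
  add_mem' := by
    intro a b ha hb
    simp only [Set.mem_setOf_eq] at *
    simp [Matrix.mulVec_add, ha, hb, smul_add]
  zero_mem' := by simp [Matrix.mulVec_zero]
  smul_mem' := by
    intro c v hv
    simp only [Set.mem_setOf_eq] at *
    rw [Matrix.mulVec_smul, hv, smul_comm]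

/-! From `M e = 1` and `ω(T0, T0) = -1` one gets `A * conj A = -1` for `A = M T0`; as `A` is unitary
this says `Aᴴ = -conj A`, so `Aᴴ` is skew-symmetric. On a subspace `V` preserved by
`v ↦ A * conj v`, the bilinear form `(x, y) ↦ xᵀ Aᴴ y` is therefore skew, and it is nondegenerate
because it pairs `w` with `A * conj w` to `wᵀ conj w = ‖w‖²`. Its Gram matrix `P` then satisfies
`det P = det Pᵀ = (-1) ^ dim V * det P ≠ 0`, so `dim V` is even. Eigenspaces of a Hermitian matrix
commuting with `ρ(T0)` are such subspaces, since the eigenvalues are real. -/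

lemma mem_eigSpace {ι : Type*} [Fintype ι] {Q : Matrix ι ι ℂ} {lam : ℂ} {v : ι → ℂ} :
    v ∈ eigSpace Q lam ↔ Q.mulVec v = lam • v := Iff.rfl

open Module
open scoped ComplexOrder

theorem Matrix.even_card_of_transpose_eq_neg {K ι : Type*} [CommRing K] [IsDomain K] [Fintype ι]
    [DecidableEq ι] (hK : ringChar K ≠ 2) {P : Matrix ι ι K} (hP : Pᵀ = -P) (hdet : P.det ≠ 0) :
    Even (Fintype.card ι) := by
  have hdet_eq : P.det = (-1) ^ Fintype.card ι * P.det := by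
    rw [← det_neg, ← hP, det_transpose]
  have hpow : (-1 : K) ^ Fintype.card ι = 1 := mul_right_cancel₀ hdet (by rw [one_mul, ← hdet_eq])
  exact (neg_one_pow_eq_one_iff_even (Ring.neg_one_ne_one_of_char_ne_two hK)).mp hpow

theorem LinearMap.BilinForm.even_finrank_of_nondegenerate_of_skew {K V : Type*} [Field K]
    [AddCommGroup V] [Module K V] [FiniteDimensional K V] (hK : ringChar K ≠ 2)
    {B : LinearMap.BilinForm K V} (hB : B.Nondegenerate) (hskew : ∀ x y, B y x = -B x y) :
    Even (finrank K V) := by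
  let b := Module.finBasis K V
  have hP : (toMatrix b B)ᵀ = -toMatrix b B := by
    ext i j
    rw [transpose_apply, Matrix.neg_apply, toMatrix_apply, toMatrix_apply, hskew]
  simpa using Matrix.even_card_of_transpose_eq_neg hK hP ((nondegenerate_iff_det_ne_zero b).mp hB)

section

variable {ι : Type*} [Fintype ι]

theorem Matrix.star_mulVec_eq_map_mulVec_star {α : Type*} [CommSemiring α] [StarRing α]
    (A : Matrix ι ι α) (v : ι → α) : star (A *ᵥ v) = A.map (starRingEnd α) *ᵥ star v :=
  funext fun i => RingHom.map_mulVec (starRingEnd α) A v i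

theorem Matrix.mulVec_star_mulVec_star {α : Type*} [CommRing α] [StarRing α] [DecidableEq ι]
    {A : Matrix ι ι α} (hA : A * A.map (starRingEnd α) = -1) (v : ι → α) : A *ᵥ star (A *ᵥ star v) = -v := by
  rw [star_mulVec_eq_map_mulVec_star, star_star, mulVec_mulVec, hA, neg_mulVec, one_mulVec]

theorem Matrix.conjTranspose_eq_neg_map_star {α : Type*} [CommRing α] [StarRing α] [DecidableEq ι]
    {A : Matrix ι ι α} (hU : A ∈ unitaryGroup ι α) (hA : A * A.map (starRingEnd α) = -1) :
    Aᴴ = -A.map (starRingEnd α) := by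
  have hU' : Aᴴ * A = 1 := mem_unitaryGroup_iff'.mp hU
  calc Aᴴ = -(Aᴴ * (A * A.map (starRingEnd α))) := by rw [hA]; simp
    _ = -A.map (starRingEnd α) := by rw [← Matrix.mul_assoc, hU', Matrix.one_mul]

theorem Matrix.IsHermitian.star_eq_of_mulVec_eq_smul {𝕜 : Type*} [Field 𝕜] [StarRing 𝕜]
    [PartialOrder 𝕜] [StarOrderedRing 𝕜] {H : Matrix ι ι 𝕜} (hH : H.IsHermitian) {lam : 𝕜}
    {v : ι → 𝕜} (hv : H *ᵥ v = lam • v) (hv0 : v ≠ 0) : star lam = lam := by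
  have hvv : star v ⬝ᵥ v ≠ 0 := mt dotProduct_star_self_eq_zero.mp hv0
  refine mul_right_cancel₀ hvv ?_
  calc star lam * (star v ⬝ᵥ v) = star (H *ᵥ v) ⬝ᵥ v := by
        rw [hv, star_smul, smul_dotProduct, smul_eq_mul]
    _ = star v ⬝ᵥ H *ᵥ v := by rw [star_mulVec, hH.eq, dotProduct_mulVec]
    _ = lam * (star v ⬝ᵥ v) := by rw [hv, dotProduct_smul, smul_eq_mul]

theorem mulVec_star_mem_eigSpace {H A : Matrix ι ι ℂ} (hH : H.IsHermitian)
    (hHA : H * A = A * H.map (starRingEnd ℂ)) {lam : ℂ} {v : ι → ℂ} (hv : v ∈ eigSpace H lam) :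
    A *ᵥ star v ∈ eigSpace H lam := by
  rcases eq_or_ne v 0 with rfl | hv0
  · simp
  rw [mem_eigSpace] at hv ⊢
  have hlam : star lam = lam := hH.star_eq_of_mulVec_eq_smul hv hv0
  calc H *ᵥ (A *ᵥ star v) = A *ᵥ star (H *ᵥ v) := by
        rw [mulVec_mulVec, hHA, ← mulVec_mulVec, star_mulVec_eq_map_mulVec_star]
    _ = lam • A *ᵥ star v := by rw [hv, star_smul, mulVec_smul, hlam]

theorem even_finrank_of_forall_mulVec_star_mem [DecidableEq ι] {A : Matrix ι ι ℂ}
    (hU : A ∈ unitaryGroup ι ℂ) (hA : A * A.map (starRingEnd ℂ) = -1) {V : Submodule ℂ (ι → ℂ)}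
    (hV : ∀ v ∈ V, A *ᵥ star v ∈ V) : Even (finrank ℂ V) := by
  have hskew : (Aᴴ)ᵀ = -Aᴴ :=
    calc (Aᴴ)ᵀ = A.map (starRingEnd ℂ) := by ext; simp
      _ = -Aᴴ := by rw [conjTranspose_eq_neg_map_star hU hA, neg_neg]
  let B := (toBilin' Aᴴ).restrict V
  have hBskew : ∀ x y, B y x = -B x y := fun x y => by
    simp only [B, LinearMap.BilinForm.restrict_apply, LinearMap.domRestrict_apply, toBilin'_apply']
    rw [dotProduct_mulVec, ← mulVec_transpose, hskew, neg_mulVec, neg_dotProduct, dotProduct_comm]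
  refine B.even_finrank_of_nondegenerate_of_skew (by simp [ringChar.eq_zero]) ?_ hBskew
  refine .ofSeparatingLeft fun w hw => ?_
  have hwJw := hw ⟨A *ᵥ star w, hV w w.2⟩
  simp only [B, LinearMap.BilinForm.restrict_apply, LinearMap.domRestrict_apply, toBilin'_apply',
    mulVec_mulVec, ← star_eq_conjTranspose, mem_unitaryGroup_iff'.mp hU, one_mulVec,
    dotProduct_self_star_eq_zero] at hwJw
  exact Subtype.ext hwJw

end

namespace IsCoRep

variable {G : Type*} [Group G] {ι : Type*} [Fintype ι] [DecidableEq ι] {s : G →* ℤˣ}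
  {M : G → Matrix ι ι ℂ} {ω : G → G → ℂ}

theorem map_one (hM : IsCoRep s M ω) (hone : ω 1 1 = 1) : M 1 = 1 := by
  have h := hM.mul_eq 1 1
  simp only [_root_.map_one, mconj, if_true, hone, one_smul, mul_one] at h
  exact (hM.isUnit 1).mul_left_cancel (h.trans (mul_one _).symm)

theorem mul_map_star_eq_neg_one (hM : IsCoRep s M ω) (hone : ω 1 1 = 1) {T : G} (hT : s T = -1)
    (hTT : T * T = 1) (hω : ω T T = -1) : M T * (M T).map (starRingEnd ℂ) = -1 := by
  have h := hM.mul_eq T T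
  rwa [hT, mconj, if_neg (by decide), hTT, hM.map_one hone, hω, neg_one_smul] at h

end IsCoRep

theorem rho_apply_of_eq_neg_one {G : Type*} [Group G] {ι : Type*} [Fintype ι] {s : G →* ℤˣ}
    {M : G → Matrix ι ι ℂ} {g : G} (hg : s g = -1) (v : ι → ℂ) : rho s M g v = M g *ᵥ star v := by
  rw [rho, vconj, hg, if_neg (by decide)]

theorem kramers_degeneracy_general {G : Type*} [Group G]
    (s : G →* ℤˣ)
    (T0 : G) (hT0 : s T0 = -1) (hT0sq : T0 * T0 = 1)
    {n : ℕ}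
    (M : G → Matrix (Fin n) (Fin n) ℂ) (ω : G → G → ℂ)
    (hM : IsUnitaryCoRep s M ω)
    (hone : ω 1 1 = 1) (hmin : ω T0 T0 = -1) :
    (∀ v : Fin n → ℂ, rho s M T0 (rho s M T0 v) = -v) ∧
    (∀ Hm : Matrix (Fin n) (Fin n) ℂ, Hm.IsHermitian →
      Hm * M T0 = M T0 * Hm.map (starRingEnd ℂ) →
      ∀ lam : ℂ, Even (Module.finrank ℂ (eigSpace Hm lam))) ∧
    Even n := by
  have hsq := hM.mul_map_star_eq_neg_one hone hT0 hT0sq hmin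
  have heven (V : Submodule ℂ (Fin n → ℂ)) (hV : ∀ v ∈ V, M T0 *ᵥ star v ∈ V) :
      Even (finrank ℂ V) :=
    even_finrank_of_forall_mulVec_star_mem (hM.unitary T0) hsq hV
  refine ⟨fun v => ?_, fun Hm hH hHM lam => heven _ fun v => mulVec_star_mem_eigSpace hH hHM, ?_⟩
  · rw [rho_apply_of_eq_neg_one hT0, rho_apply_of_eq_neg_one hT0]
    exact Matrix.mulVec_star_mulVec_star hsq v
  · simpa using heven ⊤ fun _ _ => Submodule.mem_top

/-- Kramers-type degeneracy: if `T0² = e` and `ω(T0,T0) = −1`, then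
`ρ(T0)² = −id`, every Hermitian matrix commuting with `ρ(T0)` has all eigenvalue
multiplicities even, and the dimension `n` is even. -/
theorem kramers_degeneracy {G : Type*} [Group G] [Fintype G]
    (s : G →* ℤˣ) (hs : Function.Surjective s)
    (T0 : G) (hT0 : s T0 = -1) (hT0sq : T0 * T0 = 1)
    {n : ℕ}
    (M : G → Matrix (Fin n) (Fin n) ℂ) (ω : G → G → ℂ)
    (hM : IsUnitaryCoRep s M ω)
    (hone : ω 1 1 = 1) (hmin : ω T0 T0 = -1) :
    (∀ v : Fin n → ℂ, rho s M T0 (rho s M T0 v) = -v) ∧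
    (∀ Hm : Matrix (Fin n) (Fin n) ℂ, Hm.IsHermitian →
      Hm * M T0 = M T0 * Hm.map (starRingEnd ℂ) →
      ∀ lam : ℂ, Even (Module.finrank ℂ (eigSpace Hm lam))) ∧
    Even n :=
  kramers_degeneracy_general s T0 hT0 hT0sq M ω hM hone hmin
end
end
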